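/- For j = 1, …, N_c, let Q_j ∈ (0, 1/2), R_j ∈ (0, 1/2) and P_j ∈ [0, 1], and set a_j = ln((1−R_j)/Q_j) and b_j = ln((1−Q_j)/R_j). Let τ_1, z_1, …, τ_{N_c}, z_{N_c} be mutually independent {0,1}-valued random variables with P(τ_j = 1) = P_j and P(z_j = 1) = 1 − R_j, and let S = Σ_{j=1}^{N_c} τ_j·( a_j·z_j − b_j·(1−z_j) ). Define ν_j = P_j·( (1−R_j)·a_j − R_j·b_j ), α = Σ_{j=1}^{N_c} ν_j − γ, σ² = (1/N_c)·Σ_{j=1}^{N_c} [ P_j·( (1−R_j)·a_j² + R_j·b_j² ) − ν_j² ], and M = max_{1≤j≤N_c} max{ |a_j − ν_j|, |b_j + ν_j| }. Then for every threshold γ such that 0 < α < N_c·M, P(S < γ) ≤ U(N_c, α, M, σ²). -/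

import Mathlib

open MeasureTheory ProbabilityTheory

section AuxLemmas
open Real

/-- ψ(x) = (x-2)eˣ + x + 2 has nonnegative derivative everywhere. -/
private lemma psi_deriv_nonneg (x : ℝ) : 0 ≤ (x - 1) * Real.exp x + 1 := by
  rcases le_or_gt 1 x with h | h
  · have : 0 ≤ (x - 1) * Real.exp x := mul_nonneg (by linarith) (Real.exp_pos x).le
    linarith
  · have h1 : 1 - x ≤ Real.exp (-x) := by
      have := Real.add_one_le_exp (-x); linarith
    have h2 : (1 - x) * Real.exp x ≤ Real.exp (-x) * Real.exp x :=
      mul_le_mul_of_nonneg_right h1 (Real.exp_pos x).le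
    rw [← Real.exp_add] at h2
    simp at h2
    nlinarith [Real.exp_pos x]

private lemma psi_mono : Monotone (fun x : ℝ => (x - 2) * Real.exp x + x + 2) := by
  have hd : ∀ x : ℝ, HasDerivAt (fun x : ℝ => (x - 2) * Real.exp x + x + 2)
      ((x - 1) * Real.exp x + 1) x := by
    intro x
    have h1 : HasDerivAt (fun x : ℝ => (x - 2) * Real.exp x)
        (1 * Real.exp x + (x - 2) * Real.exp x) x :=
      (((hasDerivAt_id x).sub_const 2)).mul (Real.hasDerivAt_exp x)
    have := (h1.add_const 0)
    have h2 : HasDerivAt (fun x : ℝ => (x - 2) * Real.exp x + x)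
        (1 * Real.exp x + (x - 2) * Real.exp x + 1) x := h1.add (hasDerivAt_id x)
    have h3 := h2.add_const 2
    exact h3.congr_deriv (by ring)
  exact monotone_of_deriv_nonneg
    (fun x => (hd x).differentiableAt)
    (fun x => by rw [HasDerivAt.deriv (hd x)]; exact psi_deriv_nonneg x)

private lemma psi_nonneg {x : ℝ} (hx : 0 ≤ x) : 0 ≤ (x - 2) * Real.exp x + x + 2 := by
  have := psi_mono hx
  simpa using this

private lemma psi_nonpos {x : ℝ} (hx : x ≤ 0) : (x - 2) * Real.exp x + x + 2 ≤ 0 := by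
  have := psi_mono hx
  simpa using this

private lemma expf_mono : Monotone (fun x : ℝ => Real.exp x - 1 - x - x ^ 2 / 2) := by
  have hd : ∀ x : ℝ, HasDerivAt (fun x : ℝ => Real.exp x - 1 - x - x ^ 2 / 2)
      (Real.exp x - 1 - x) x := by
    intro x
    have h1 := (((Real.hasDerivAt_exp x).sub_const 1).sub (hasDerivAt_id x)).sub
      (((hasDerivAt_pow 2 x)).div_const 2)
    exact h1.congr_deriv (by push_cast; ring)
  exact monotone_of_deriv_nonneg (fun x => (hd x).differentiableAt)
    (fun x => by rw [(hd x).deriv]; nlinarith [Real.add_one_le_exp x])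

private lemma quad_le_exp {w : ℝ} (hw : 0 ≤ w) : w ^ 2 / 2 ≤ Real.exp w - 1 - w := by
  have := expf_mono hw; simp at this; linarith

private lemma exp_le_quad {x : ℝ} (hx : x ≤ 0) : Real.exp x - 1 - x ≤ x ^ 2 / 2 := by
  have := expf_mono hx; simp at this; linarith

/-- Derivative of φ(x) = (eˣ - 1 - x)/x² at x ≠ 0. -/
private lemma phi_hasDeriv {x : ℝ} (hx : x ≠ 0) :
    HasDerivAt (fun y : ℝ => (Real.exp y - 1 - y) / y ^ 2)
      (((Real.exp x - 1) * x ^ 2 - (Real.exp x - 1 - x) * (2 * x)) / (x ^ 2) ^ 2) x := by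
  have hnum : HasDerivAt (fun y : ℝ => Real.exp y - 1 - y) (Real.exp x - 1) x := by
    have := ((Real.hasDerivAt_exp x).sub_const 1).sub (hasDerivAt_id x)
    exact this
  have hden : HasDerivAt (fun y : ℝ => y ^ 2) (2 * x) x := by
    have := hasDerivAt_pow 2 x
    exact this.congr_deriv (by push_cast; ring)
  exact hnum.div hden (pow_ne_zero 2 hx)

private lemma phi_deriv_nonneg {x : ℝ} (hx : x ≠ 0) :
    0 ≤ ((Real.exp x - 1) * x ^ 2 - (Real.exp x - 1 - x) * (2 * x)) / (x ^ 2) ^ 2 := by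
  apply div_nonneg _ (by positivity)
  have hfact : (Real.exp x - 1) * x ^ 2 - (Real.exp x - 1 - x) * (2 * x)
      = x * ((x - 2) * Real.exp x + x + 2) := by ring
  rw [hfact]
  rcases le_or_gt 0 x with h | h
  · exact mul_nonneg h (psi_nonneg h)
  · nlinarith [psi_nonpos h.le]

private lemma phi_mono_Ioi : MonotoneOn (fun y : ℝ => (Real.exp y - 1 - y) / y ^ 2) (Set.Ioi 0) := by
  have hi : interior (Set.Ioi (0:ℝ)) = Set.Ioi 0 := interior_Ioi
  refine monotoneOn_of_deriv_nonneg (convex_Ioi 0) ?_ ?_ ?_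
  · intro x hx
    exact ((phi_hasDeriv (ne_of_gt hx)).continuousAt).continuousWithinAt
  · intro x hx
    rw [hi] at hx
    exact (phi_hasDeriv (ne_of_gt hx)).differentiableAt.differentiableWithinAt
  · intro x hx
    rw [hi] at hx
    rw [(phi_hasDeriv (ne_of_gt hx)).deriv]
    exact phi_deriv_nonneg (ne_of_gt hx)

private lemma phi_mono_Iio : MonotoneOn (fun y : ℝ => (Real.exp y - 1 - y) / y ^ 2) (Set.Iio 0) := by
  have hi : interior (Set.Iio (0:ℝ)) = Set.Iio 0 := interior_Iio
  refine monotoneOn_of_deriv_nonneg (convex_Iio 0) ?_ ?_ ?_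
  · intro x hx
    exact ((phi_hasDeriv (ne_of_lt hx)).continuousAt).continuousWithinAt
  · intro x hx
    rw [hi] at hx
    exact (phi_hasDeriv (ne_of_lt hx)).differentiableAt.differentiableWithinAt
  · intro x hx
    rw [hi] at hx
    rw [(phi_hasDeriv (ne_of_lt hx)).deriv]
    exact phi_deriv_nonneg (ne_of_lt hx)

/-- Monotonicity of `(eˣ-1-x)/x²` in product form, valid for all reals. -/
private lemma phi_key {x w : ℝ} (hxw : x ≤ w) :
    (Real.exp x - 1 - x) * w ^ 2 ≤ (Real.exp w - 1 - w) * x ^ 2 := by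
  rcases eq_or_ne x 0 with rfl | hx0
  · simp
  rcases eq_or_ne w 0 with rfl | hw0
  · simp
  have hx2 : (0:ℝ) < x ^ 2 := by positivity
  have hw2 : (0:ℝ) < w ^ 2 := by positivity
  rcases lt_or_gt_of_ne hx0 with hxneg | hxpos
  · rcases lt_or_gt_of_ne hw0 with hwneg | hwpos
    · -- both negative
      have := phi_mono_Iio hxneg hwneg hxw
      rw [div_le_div_iff₀ hx2 hw2] at this
      linarith
    · -- x < 0 < w
      have h1 : (Real.exp x - 1 - x) * w ^ 2 ≤ x ^ 2 / 2 * w ^ 2 :=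
        mul_le_mul_of_nonneg_right (exp_le_quad hxneg.le) hw2.le
      have h2 : w ^ 2 / 2 * x ^ 2 ≤ (Real.exp w - 1 - w) * x ^ 2 :=
        mul_le_mul_of_nonneg_right (quad_le_exp hwpos.le) hx2.le
      nlinarith
  · -- both positive
    have hwpos : 0 < w := lt_of_lt_of_le hxpos hxw
    have := phi_mono_Ioi (Set.mem_Ioi.2 hxpos) (Set.mem_Ioi.2 hwpos) hxw
    rw [div_le_div_iff₀ hx2 hw2] at this
    linarith

/-- Pointwise Bennett bound: for `0 ≤ Λ`, `0 < M`, `y ≤ M`,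
`exp (Λ/M * y) ≤ 1 + Λ/M*y + y²/M² * (e^Λ - 1 - Λ)`. -/
lemma bennett_pointwise {Λ M y : ℝ} (hΛ : 0 ≤ Λ) (hM : 0 < M) (hy : y ≤ M) :
    Real.exp (Λ / M * y) ≤ 1 + Λ / M * y + y ^ 2 / M ^ 2 * (Real.exp Λ - 1 - Λ) := by
  rcases eq_or_lt_of_le hΛ with rfl | hΛpos
  · simp
  have hx : Λ / M * y ≤ Λ := by
    rw [div_mul_eq_mul_div, div_le_iff₀ hM]
    nlinarith
  have := phi_key hx
  have hΛ2 : (0:ℝ) < Λ ^ 2 := by positivity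
  have hM2 : (0:ℝ) < M ^ 2 := by positivity
  -- (exp(Λy/M) - 1 - Λy/M) * Λ² ≤ (e^Λ-1-Λ) * (Λy/M)²
  have h2 : (Real.exp (Λ / M * y) - 1 - Λ / M * y) * Λ ^ 2
      ≤ (Real.exp Λ - 1 - Λ) * (Λ / M * y) ^ 2 := this
  have h3 : (Λ / M * y) ^ 2 = Λ ^ 2 * y ^ 2 / M ^ 2 := by field_simp
  rw [h3] at h2
  have h4 : Real.exp (Λ / M * y) - 1 - Λ / M * y ≤ (Real.exp Λ - 1 - Λ) * y ^ 2 / M ^ 2 := by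
    rw [← mul_le_mul_iff_of_pos_right hΛ2]
    calc (Real.exp (Λ / M * y) - 1 - Λ / M * y) * Λ ^ 2
        ≤ (Real.exp Λ - 1 - Λ) * (Λ ^ 2 * y ^ 2 / M ^ 2) := h2
      _ = (Real.exp Λ - 1 - Λ) * y ^ 2 / M ^ 2 * Λ ^ 2 := by ring
  have h5 : y ^ 2 / M ^ 2 * (Real.exp Λ - 1 - Λ) = (Real.exp Λ - 1 - Λ) * y ^ 2 / M ^ 2 := by ring
  linarith

/-- AM-GM: product of nonnegative reals is at most the n-th power of their average. -/
lemma prod_le_pow_avg {n : ℕ} (hn : 0 < n) (f : Fin n → ℝ) (hf : ∀ i, 0 ≤ f i) :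
    ∏ i, f i ≤ ((∑ i, f i) / n) ^ n := by
  have hn' : (0:ℝ) < n := by exact_mod_cast hn
  have hgeom := Real.geom_mean_le_arith_mean_weighted Finset.univ (fun _ => 1 / (n:ℝ)) f
    (fun i _ => by positivity)
    (by simp [Finset.card_univ]; field_simp)
    (fun i _ => hf i)
  have hsum : ∑ i, (1 / (n:ℝ)) * f i = (∑ i, f i) / n := by
    rw [← Finset.mul_sum]; ring
  rw [hsum] at hgeom
  have hLHSnn : 0 ≤ ∏ i, f i ^ (1 / (n:ℝ)) :=
    Finset.prod_nonneg fun i _ => Real.rpow_nonneg (hf i) _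
  have hpow := pow_le_pow_left₀ hLHSnn hgeom n
  have hLHS : (∏ i, f i ^ (1 / (n:ℝ))) ^ n = ∏ i, f i := by
    rw [← Finset.prod_pow]
    refine Finset.prod_congr rfl fun i _ => ?_
    rw [← Real.rpow_natCast (f i ^ (1 / (n:ℝ))) n, ← Real.rpow_mul (hf i)]
    rw [one_div, inv_mul_cancel₀ (by positivity), Real.rpow_one]
  rw [hLHS] at hpow
  exact hpow

open MeasureTheory ProbabilityTheory in
/-- Factorization of the expectation of a product of functions of independent pairs. -/
lemma integral_prod_pairs {Ω : Type*} [MeasureSpace Ω] [IsProbabilityMeasure (ℙ : Measure Ω)]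
    {Nc : ℕ} (τ z : Fin Nc → Ω → ℝ)
    (hτmeas : ∀ j, Measurable (τ j)) (hzmeas : ∀ j, Measurable (z j))
    (hindep : iIndepFun (Sum.elim τ z) ℙ)
    (G : Fin Nc → ℝ → ℝ → ℝ) (hG : ∀ j, Measurable fun p : ℝ × ℝ => G j p.1 p.2)
    (s : Finset (Fin Nc)) :
    (∫ ω, ∏ j ∈ s, G j (τ j ω) (z j ω) ∂ℙ) = ∏ j ∈ s, ∫ ω, G j (τ j ω) (z j ω) ∂ℙ := by
  classical
  set W : (Fin Nc ⊕ Fin Nc) → Ω → ℝ := Sum.elim τ z with hWdef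
  have hW : ∀ k, Measurable (W k) := by rintro (j | j); exacts [hτmeas j, hzmeas j]
  have hGmeas : ∀ j, Measurable fun ω => G j (τ j ω) (z j ω) := fun j =>
    (hG j).comp ((hτmeas j).prodMk (hzmeas j))
  induction s using Finset.induction_on with
  | empty => simp
  | insert i s his ih =>
    have hprodmeas : Measurable fun ω => ∏ j ∈ s, G j (τ j ω) (z j ω) := by
      apply Finset.measurable_prod
      exact fun j _ => hGmeas j
    -- independence of the i-th factor from the product over s
    set S : Finset (Fin Nc ⊕ Fin Nc) := {Sum.inl i, Sum.inr i} with hSdef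
    set T : Finset (Fin Nc ⊕ Fin Nc) := s.image Sum.inl ∪ s.image Sum.inr with hTdef
    have hST : Disjoint S T := by
      rw [Finset.disjoint_left]
      intro k hk hkT
      simp only [hSdef, Finset.mem_insert, Finset.mem_singleton] at hk
      simp only [hTdef, Finset.mem_union, Finset.mem_image] at hkT
      rcases hk with rfl | rfl <;> rcases hkT with ⟨j, hj, hjk⟩ | ⟨j, hj, hjk⟩ <;>
        simp_all <;> exact his (hjk ▸ hj)
    have hiS1 : (Sum.inl i : Fin Nc ⊕ Fin Nc) ∈ S := by simp [hSdef]
    have hiS2 : (Sum.inr i : Fin Nc ⊕ Fin Nc) ∈ S := by simp [hSdef]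
    have hmem1 : ∀ j : {x // x ∈ s}, (Sum.inl j.1 : Fin Nc ⊕ Fin Nc) ∈ T := fun j =>
      Finset.mem_union_left _ (Finset.mem_image_of_mem _ j.2)
    have hmem2 : ∀ j : {x // x ∈ s}, (Sum.inr j.1 : Fin Nc ⊕ Fin Nc) ∈ T := fun j =>
      Finset.mem_union_right _ (Finset.mem_image_of_mem _ j.2)
    set φ : ((k : S) → ℝ) → ℝ := fun v => G i (v ⟨Sum.inl i, hiS1⟩) (v ⟨Sum.inr i, hiS2⟩) with hφdef
    set ψ : ((k : T) → ℝ) → ℝ := fun v =>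
      ∏ j ∈ s.attach, G j.1 (v ⟨Sum.inl j.1, hmem1 j⟩) (v ⟨Sum.inr j.1, hmem2 j⟩) with hψdef
    have hφ : Measurable φ := by
      have h1 : Measurable fun v : ((k : S) → ℝ) => (v ⟨Sum.inl i, hiS1⟩, v ⟨Sum.inr i, hiS2⟩) :=
        (measurable_pi_apply _).prodMk (measurable_pi_apply _)
      exact (hG i).comp h1
    have hψ : Measurable ψ := by
      apply Finset.measurable_prod
      intro j _
      have h1 : Measurable fun v : ((k : T) → ℝ) =>
          (v ⟨Sum.inl j.1, hmem1 j⟩, v ⟨Sum.inr j.1, hmem2 j⟩) :=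
        (measurable_pi_apply _).prodMk (measurable_pi_apply _)
      exact (hG j.1).comp h1
    have hind := ((hindep.indepFun_finset S T hST hW).comp hφ hψ)
    have heq1 : (φ ∘ fun ω (k : S) => W k ω) = fun ω => G i (τ i ω) (z i ω) := rfl
    have heq2 : (ψ ∘ fun ω (k : T) => W k ω) = fun ω => ∏ j ∈ s, G j (τ j ω) (z j ω) := by
      funext ω
      exact Finset.prod_attach s fun j => G j (τ j ω) (z j ω)
    rw [heq1, heq2] at hind
    rw [Finset.prod_insert his]
    have := hind.integral_fun_mul_eq_mul_integral (hGmeas i).aestronglyMeasurable hprodmeas.aestronglyMeasurable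
    calc (∫ ω, ∏ j ∈ insert i s, G j (τ j ω) (z j ω) ∂ℙ)
        = ∫ ω, G i (τ i ω) (z i ω) * ∏ j ∈ s, G j (τ j ω) (z j ω) ∂ℙ := by
          congr 1; funext ω; exact Finset.prod_insert his
      _ = (∫ ω, G i (τ i ω) (z i ω) ∂ℙ) * ∫ ω, ∏ j ∈ s, G j (τ j ω) (z j ω) ∂ℙ := this
      _ = _ := by rw [ih]

end AuxLemmas

/-- The bounding function `U(n, α, M, σ²)` of the improved Bennett inequality,
with `Λ ≥ 0` the solution of `(A − Λ)e^{−Λ} = B` (for `A = M²/σ² + nM/α − 1`,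
`B = nM/α − 1`) passed as a parameter. -/
noncomputable def U (n : ℕ) (α M σ2 Λ : ℝ) : ℝ :=
  Real.exp (-(Λ * α / M) + n * Real.log (1 + σ2 / M ^ 2 * (Real.exp Λ - 1 - Λ)))

set_option maxHeartbeats 1000000 in
/-- **Proposition 4** of the paper: upper bound on the missed-detection probability of
the fusion center's final decision under `H₁`. Cluster `j` communicates with probability
`Pⱼ` (indicator `τⱼ`) and its one-bit decision `zⱼ` equals 1 with probability `1 − Rⱼ`
under `H₁`; all `τⱼ, zⱼ` are mutually independent. With
`S = ∑ⱼ τⱼ·(aⱼ·zⱼ − bⱼ·(1−zⱼ))`, `νⱼ = Pⱼ·((1−Rⱼ)aⱼ − Rⱼbⱼ)`, `α = ∑ νⱼ − γ`,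
`σ² = (1/N_c)∑ [Pⱼ·((1−Rⱼ)aⱼ² + Rⱼbⱼ²) − νⱼ²]`, and
`M = maxⱼ max{|aⱼ−νⱼ|, |bⱼ+νⱼ|}`, we have `P(S < γ) ≤ U(N_c, α, M, σ²)`
whenever `0 < α < N_c·M`. -/
theorem fc_missed_detection_bound
    {Ω : Type*} [MeasureSpace Ω] [IsProbabilityMeasure (ℙ : Measure Ω)]
    (Nc : ℕ) (Q R P : Fin Nc → ℝ)
    (hQ : ∀ j, Q j ∈ Set.Ioo (0 : ℝ) (1 / 2)) (hR : ∀ j, R j ∈ Set.Ioo (0 : ℝ) (1 / 2))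
    (hP : ∀ j, P j ∈ Set.Icc (0 : ℝ) 1)
    (a b : Fin Nc → ℝ)
    (ha : ∀ j, a j = Real.log ((1 - R j) / Q j))
    (hb : ∀ j, b j = Real.log ((1 - Q j) / R j))
    (τ z : Fin Nc → Ω → ℝ)
    (hτmeas : ∀ j, Measurable (τ j)) (hzmeas : ∀ j, Measurable (z j))
    (hτ01 : ∀ j ω, τ j ω = 0 ∨ τ j ω = 1) (hz01 : ∀ j ω, z j ω = 0 ∨ z j ω = 1)
    (hindep : iIndepFun (Sum.elim τ z) ℙ)
    (hτber : ∀ j, (ℙ {ω | τ j ω = 1}).toReal = P j)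
    (hzber : ∀ j, (ℙ {ω | z j ω = 1}).toReal = 1 - R j)
    (ν : Fin Nc → ℝ) (hν : ∀ j, ν j = P j * ((1 - R j) * a j - R j * b j))
    (γ α σ2 M : ℝ)
    (hα : α = (∑ j, ν j) - γ)
    (hσ2 : σ2 = (1 / Nc) *
      ∑ j, (P j * ((1 - R j) * (a j) ^ 2 + R j * (b j) ^ 2) - (ν j) ^ 2))
    (hM : IsGreatest (Set.range fun j => max |a j - ν j| |b j + ν j|) M)
    (hα0 : 0 < α) (hαn : α < Nc * M)
    (Λ : ℝ) (hΛ0 : 0 ≤ Λ)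
    (hΛ : (M ^ 2 / σ2 + Nc * M / α - 1 - Λ) * Real.exp (-Λ) = Nc * M / α - 1) :
    (ℙ {ω | ∑ j, τ j ω * (a j * z j ω - b j * (1 - z j ω)) < γ}).toReal
      ≤ U Nc α M σ2 Λ := by
  classical
  -- basic positivity facts
  have hMbd1 : ∀ j, |a j - ν j| ≤ M := fun j =>
    le_trans (le_max_left _ _) (hM.2 (Set.mem_range_self j))
  have hMbd2 : ∀ j, |b j + ν j| ≤ M := fun j =>
    le_trans (le_max_right _ _) (hM.2 (Set.mem_range_self j))
  have hM0 : 0 < M := by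
    by_contra h
    push_neg at h
    have : (Nc : ℝ) * M ≤ 0 := mul_nonpos_of_nonneg_of_nonpos (Nat.cast_nonneg _) h
    linarith
  have hNcR : 0 < (Nc : ℝ) := by
    rcases Nat.eq_zero_or_pos Nc with h | h
    · subst h; simp at hαn; linarith
    · exact_mod_cast h
  have hNc0 : 0 < Nc := by exact_mod_cast hNcR
  have hb0 : ∀ j, 0 < b j := by
    intro j
    rw [hb j]
    apply Real.log_pos
    rw [one_lt_div (hR j).1]
    linarith [(hQ j).2, (hR j).2]
  have hνM : ∀ j, ν j ≤ M := by
    intro j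
    rcases le_or_gt (ν j) 0 with h | h
    · linarith
    · have h1 : b j + ν j ≤ |b j + ν j| := le_abs_self _
      have := hb0 j
      linarith [hMbd2 j]
  -- the centered variables
  set Y : Fin Nc → Ω → ℝ := fun j ω => ν j - τ j ω * (a j * z j ω - b j * (1 - z j ω)) with hYdef
  have hYmeas : ∀ j, Measurable (Y j) := by
    intro j
    apply Measurable.sub measurable_const
    exact (hτmeas j).mul (((hzmeas j).const_mul (a j)).sub
      ((measurable_const.sub (hzmeas j)).const_mul (b j)))
  have hYM : ∀ j ω, Y j ω ≤ M := by
    intro j ω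
    have h1 := hMbd1 j
    have h2 := hMbd2 j
    have h3 := abs_le.1 h1
    have h4 := abs_le.1 h2
    rcases hτ01 j ω with h | h <;> rcases hz01 j ω with h' | h' <;>
      simp only [hYdef, h, h'] <;> nlinarith [hνM j]
  set t : ℝ := Λ / M with htdef
  have ht0 : 0 ≤ t := div_nonneg hΛ0 hM0.le
  have htM : t * M = Λ := div_mul_cancel₀ Λ (ne_of_gt hM0)
  set g : ℝ := Real.exp Λ - 1 - Λ with hgdef
  have hg0 : 0 ≤ g := by
    have := Real.add_one_le_exp Λ
    simp only [hgdef]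
    linarith
  -- nonnegative "variance" terms
  have hv0 : ∀ j, 0 ≤ P j * ((1 - R j) * a j ^ 2 + R j * b j ^ 2) - ν j ^ 2 := by
    intro j
    have hid : P j * ((1 - R j) * a j ^ 2 + R j * b j ^ 2) - ν j ^ 2
        = (1 - P j) * ν j ^ 2 + P j * (1 - R j) * (ν j - a j) ^ 2
          + P j * R j * (ν j + b j) ^ 2 := by
      rw [hν j]; ring
    rw [hid]
    have h1 : (0:ℝ) ≤ 1 - P j := by linarith [(hP j).2]
    have h2 := (hP j).1
    have h3 : (0:ℝ) ≤ 1 - R j := by linarith [(hR j).2]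
    have h4 := (hR j).1.le
    positivity
  -- integrability of the 0/1 variables
  have hbd01 : ∀ f : Ω → ℝ, Measurable f → (∀ ω, f ω = 0 ∨ f ω = 1) → Integrable f ℙ := by
    intro f hf h01
    refine Integrable.mono' (integrable_const 1) hf.aestronglyMeasurable ?_
    refine ae_of_all _ fun ω => ?_
    rcases h01 ω with h | h <;> simp [h]
  have hτint : ∀ j, Integrable (τ j) ℙ := fun j => hbd01 _ (hτmeas j) (hτ01 j)
  have hτzint : ∀ j, Integrable (fun ω => τ j ω * z j ω) ℙ := by
    intro j
    refine hbd01 _ ((hτmeas j).mul (hzmeas j)) fun ω => ?_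
    rcases hτ01 j ω with h | h <;> rcases hz01 j ω with h' | h' <;> simp [h, h']
  -- expectations of the Bernoulli variables
  have hEτ : ∀ j, (∫ ω, τ j ω) = P j := by
    intro j
    have hset : MeasurableSet {ω | τ j ω = 1} := hτmeas j (measurableSet_singleton 1)
    have hind : τ j = Set.indicator {ω | τ j ω = 1} (fun _ => (1:ℝ)) := by
      funext ω
      rcases hτ01 j ω with h | h <;> simp [Set.indicator_apply, h]
    rw [hind, integral_indicator_const (1:ℝ) hset]
    simp [measureReal_def, hτber j]
  have hEz : ∀ j, (∫ ω, z j ω) = 1 - R j := by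
    intro j
    have hset : MeasurableSet {ω | z j ω = 1} := hzmeas j (measurableSet_singleton 1)
    have hind : z j = Set.indicator {ω | z j ω = 1} (fun _ => (1:ℝ)) := by
      funext ω
      rcases hz01 j ω with h | h <;> simp [Set.indicator_apply, h]
    rw [hind, integral_indicator_const (1:ℝ) hset]
    simp [measureReal_def, hzber j]
  have hEτz : ∀ j, (∫ ω, τ j ω * z j ω) = P j * (1 - R j) := by
    intro j
    have hIndep : IndepFun (τ j) (z j) ℙ := by
      have h := hindep.indepFun (show (Sum.inl j : Fin Nc ⊕ Fin Nc) ≠ Sum.inr j by simp)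
      exact h
    rw [hIndep.integral_fun_mul_eq_mul_integral (hτmeas j).aestronglyMeasurable (hzmeas j).aestronglyMeasurable,
      hEτ j, hEz j]
  -- pointwise decomposition of exp (t * Y j)
  have hexp_id : ∀ j ω, Real.exp (t * Y j ω) =
      (1 - τ j ω) * Real.exp (t * ν j) + (τ j ω * z j ω) * Real.exp (t * (ν j - a j))
        + (τ j ω * (1 - z j ω)) * Real.exp (t * (ν j + b j)) := by
    intro j ω
    rcases hτ01 j ω with h | h <;> rcases hz01 j ω with h' | h' <;>
      simp [hYdef, h, h'] <;> ring_nf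
  -- value of the per-cluster mgf
  have hEY : ∀ j, (∫ ω, Real.exp (t * Y j ω)) =
      (1 - P j) * Real.exp (t * ν j) + P j * (1 - R j) * Real.exp (t * (ν j - a j))
        + P j * R j * Real.exp (t * (ν j + b j)) := by
    intro j
    have hint1 : Integrable (fun ω => (1 - τ j ω) * Real.exp (t * ν j)) ℙ :=
      (hbd01 _ (measurable_const.sub (hτmeas j))
        (fun ω => by rcases hτ01 j ω with h | h <;> simp [h])).mul_const _
    have hint2 : Integrable (fun ω => (τ j ω * z j ω) * Real.exp (t * (ν j - a j))) ℙ :=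
      (hτzint j).mul_const _
    have hint3 : Integrable (fun ω => (τ j ω * (1 - z j ω)) * Real.exp (t * (ν j + b j))) ℙ :=
      (hbd01 _ ((hτmeas j).mul (measurable_const.sub (hzmeas j)))
        (fun ω => by rcases hτ01 j ω with h | h <;> rcases hz01 j ω with h' | h' <;>
          simp [h, h'])).mul_const _
    calc (∫ ω, Real.exp (t * Y j ω))
        = ∫ ω, ((1 - τ j ω) * Real.exp (t * ν j)
            + (τ j ω * z j ω) * Real.exp (t * (ν j - a j))
            + (τ j ω * (1 - z j ω)) * Real.exp (t * (ν j + b j))) := by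
          exact integral_congr_ae (ae_of_all _ fun ω => hexp_id j ω)
      _ = (∫ ω, (1 - τ j ω) * Real.exp (t * ν j))
            + (∫ ω, (τ j ω * z j ω) * Real.exp (t * (ν j - a j)))
            + ∫ ω, (τ j ω * (1 - z j ω)) * Real.exp (t * (ν j + b j)) := by
          have hint12 : Integrable (fun ω => (1 - τ j ω) * Real.exp (t * ν j)
              + τ j ω * z j ω * Real.exp (t * (ν j - a j))) ℙ := hint1.add hint2
          rw [integral_add hint12 hint3, integral_add hint1 hint2]
      _ = (1 - P j) * Real.exp (t * ν j) + P j * (1 - R j) * Real.exp (t * (ν j - a j))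
            + P j * R j * Real.exp (t * (ν j + b j)) := by
          rw [integral_mul_const, integral_mul_const, integral_mul_const]
          rw [integral_sub (integrable_const 1) (hτint j)]
          have h1 : (∫ ω, τ j ω * (1 - z j ω)) = P j - P j * (1 - R j) := by
            have : (fun ω => τ j ω * (1 - z j ω)) = fun ω => τ j ω - τ j ω * z j ω := by
              funext ω; ring
            rw [this, integral_sub (hτint j) (hτzint j), hEτ j, hEτz j]
          rw [h1, hEτ j, hEτz j]
          simp
          ring
  -- the per-cluster mgf bound
  have hmgf_le : ∀ j, (∫ ω, Real.exp (t * Y j ω)) ≤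
      1 + (P j * ((1 - R j) * a j ^ 2 + R j * b j ^ 2) - ν j ^ 2) * g / M ^ 2 := by
    intro j
    have hw0 : (0:ℝ) ≤ 1 - P j := by linarith [(hP j).2]
    have hw1 : (0:ℝ) ≤ P j * (1 - R j) := mul_nonneg (hP j).1 (by linarith [(hR j).2])
    have hw2 : (0:ℝ) ≤ P j * R j := mul_nonneg (hP j).1 (hR j).1.le
    have hB0 := bennett_pointwise hΛ0 hM0 (hνM j)
    have hB1 := bennett_pointwise hΛ0 hM0 (show ν j - a j ≤ M by
      have := abs_le.1 (hMbd1 j); linarith)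
    have hB2 := bennett_pointwise hΛ0 hM0 (show ν j + b j ≤ M by
      have := abs_le.1 (hMbd2 j); linarith)
    rw [← htdef, ← hgdef] at hB0 hB1 hB2
    rw [hEY j]
    have key : (1 - P j) * (1 + t * ν j + ν j ^ 2 / M ^ 2 * g)
        + P j * (1 - R j) * (1 + t * (ν j - a j) + (ν j - a j) ^ 2 / M ^ 2 * g)
        + P j * R j * (1 + t * (ν j + b j) + (ν j + b j) ^ 2 / M ^ 2 * g)
        = 1 + (P j * ((1 - R j) * a j ^ 2 + R j * b j ^ 2) - ν j ^ 2) * g / M ^ 2 := by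
      rw [hν j]; ring
    calc (1 - P j) * Real.exp (t * ν j) + P j * (1 - R j) * Real.exp (t * (ν j - a j))
          + P j * R j * Real.exp (t * (ν j + b j))
        ≤ (1 - P j) * (1 + t * ν j + ν j ^ 2 / M ^ 2 * g)
          + P j * (1 - R j) * (1 + t * (ν j - a j) + (ν j - a j) ^ 2 / M ^ 2 * g)
          + P j * R j * (1 + t * (ν j + b j) + (ν j + b j) ^ 2 / M ^ 2 * g) := by
          gcongr <;> assumption
      _ = _ := key
  -- integrability of the per-cluster exponentials and of the sum
  have hexpint : ∀ j, Integrable (fun ω => Real.exp (t * Y j ω)) ℙ := by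
    intro j
    refine Integrable.mono' (integrable_const (Real.exp Λ))
      (((hYmeas j).const_mul t).exp.aestronglyMeasurable) (ae_of_all _ fun ω => ?_)
    rw [Real.norm_eq_abs, abs_of_nonneg (Real.exp_pos _).le]
    apply Real.exp_le_exp.2
    calc t * Y j ω ≤ t * M := mul_le_mul_of_nonneg_left (hYM j ω) ht0
      _ = Λ := htM
  set Xs : Ω → ℝ := fun ω => ∑ j, Y j ω with hXsdef
  have hXsmeas : Measurable Xs := by
    apply Finset.measurable_sum
    exact fun j _ => hYmeas j
  have hXsint : Integrable (fun ω => Real.exp (t * Xs ω)) ℙ := by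
    refine Integrable.mono' (integrable_const (Real.exp (t * (Nc * M))))
      ((hXsmeas.const_mul t).exp.aestronglyMeasurable) (ae_of_all _ fun ω => ?_)
    rw [Real.norm_eq_abs, abs_of_nonneg (Real.exp_pos _).le]
    apply Real.exp_le_exp.2
    apply mul_le_mul_of_nonneg_left _ ht0
    calc Xs ω ≤ ∑ _j : Fin Nc, M := Finset.sum_le_sum fun j _ => hYM j ω
      _ = Nc * M := by simp [Finset.sum_const, nsmul_eq_mul]
  -- Chernoff bound
  have hchern : (ℙ {ω | α ≤ Xs ω}).toReal ≤ Real.exp (-t * α) * mgf Xs ℙ t :=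
    measure_ge_le_exp_mul_mgf α ht0 hXsint
  -- factorization of the mgf
  have hG : ∀ j : Fin Nc, Measurable fun p : ℝ × ℝ =>
      Real.exp (t * (ν j - p.1 * (a j * p.2 - b j * (1 - p.2)))) := by
    intro j; fun_prop
  have hfact0 : (∫ ω, ∏ j, Real.exp (t * Y j ω)) = ∏ j, ∫ ω, Real.exp (t * Y j ω) := by
    have h := integral_prod_pairs τ z hτmeas hzmeas hindep
      (fun j x y => Real.exp (t * (ν j - x * (a j * y - b j * (1 - y))))) hG Finset.univ
    exact h
  have hmgf_eq : mgf Xs ℙ t = ∫ ω, ∏ j, Real.exp (t * Y j ω) := by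
    have h1 : mgf Xs ℙ t = ∫ ω, Real.exp (t * Xs ω) := rfl
    rw [h1]
    apply integral_congr_ae (ae_of_all _ fun ω => ?_)
    simp only [hXsdef]
    rw [Finset.mul_sum, Real.exp_sum]
  have hfact : mgf Xs ℙ t = ∏ j, ∫ ω, Real.exp (t * Y j ω) := by rw [hmgf_eq, hfact0]
  -- bounding the product
  set c : Fin Nc → ℝ := fun j =>
    1 + (P j * ((1 - R j) * a j ^ 2 + R j * b j ^ 2) - ν j ^ 2) * g / M ^ 2 with hcdef
  have hc0 : ∀ j, 0 ≤ c j := by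
    intro j
    have h : 0 ≤ (P j * ((1 - R j) * a j ^ 2 + R j * b j ^ 2) - ν j ^ 2) * g / M ^ 2 :=
      div_nonneg (mul_nonneg (hv0 j) hg0) (by positivity)
    simp only [hcdef]
    linarith
  have hcsum : (∑ j, c j) / (Nc : ℝ) = 1 + σ2 * g / M ^ 2 := by
    simp only [hcdef]
    rw [Finset.sum_add_distrib, Finset.sum_const, Finset.card_univ, Fintype.card_fin, hσ2]
    simp only [nsmul_eq_mul, mul_one]
    have hsum : (∑ j, (P j * ((1 - R j) * a j ^ 2 + R j * b j ^ 2) - ν j ^ 2) * g / M ^ 2)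
        = (∑ j, (P j * ((1 - R j) * a j ^ 2 + R j * b j ^ 2) - ν j ^ 2)) * g / M ^ 2 := by
      rw [← Finset.sum_div, ← Finset.sum_mul]
    rw [hsum, add_div, div_self (ne_of_gt hNcR)]
    ring
  have hprod_le : (∏ j, ∫ ω, Real.exp (t * Y j ω)) ≤ (1 + σ2 * g / M ^ 2) ^ Nc := by
    have h1 : (∏ j, ∫ ω, Real.exp (t * Y j ω)) ≤ ∏ j, c j := by
      apply Finset.prod_le_prod
      · exact fun j _ => integral_nonneg fun ω => (Real.exp_pos _).le
      · exact fun j _ => hmgf_le j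
    have h2 : (∏ j, c j) ≤ ((∑ j, c j) / (Nc : ℝ)) ^ Nc := prod_le_pow_avg hNc0 c hc0
    rw [hcsum] at h2
    exact le_trans h1 h2
  -- nonnegativity of σ2 and the final base
  have hσ2nn : 0 ≤ σ2 := by
    rw [hσ2]
    apply mul_nonneg (by positivity)
    exact Finset.sum_nonneg fun j _ => hv0 j
  have hbase : (0:ℝ) < 1 + σ2 * g / M ^ 2 := by
    have : 0 ≤ σ2 * g / M ^ 2 := by positivity
    linarith
  -- event inclusion
  have hsub : {ω | ∑ j, τ j ω * (a j * z j ω - b j * (1 - z j ω)) < γ} ⊆ {ω | α ≤ Xs ω} := by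
    intro ω hω
    simp only [Set.mem_setOf_eq] at hω ⊢
    have hXseq : Xs ω = (∑ j, ν j) - ∑ j, τ j ω * (a j * z j ω - b j * (1 - z j ω)) := by
      simp only [hXsdef, hYdef]
      rw [Finset.sum_sub_distrib]
    rw [hXseq, hα]
    linarith
  have hmono : (ℙ {ω | ∑ j, τ j ω * (a j * z j ω - b j * (1 - z j ω)) < γ}).toReal
      ≤ (ℙ {ω | α ≤ Xs ω}).toReal :=
    ENNReal.toReal_mono (measure_ne_top _ _) (measure_mono hsub)
  -- put everything together
  have hfinal : Real.exp (-t * α) * (1 + σ2 * g / M ^ 2) ^ Nc = U Nc α M σ2 Λ := by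
    rw [U]
    have hpow : (1 + σ2 * g / M ^ 2) ^ Nc
        = Real.exp ((Nc : ℝ) * Real.log (1 + σ2 * g / M ^ 2)) := by
      rw [Real.exp_nat_mul, Real.exp_log hbase]
    rw [hpow, ← Real.exp_add]
    congr 1
    have h1 : σ2 * g / M ^ 2 = σ2 / M ^ 2 * (Real.exp Λ - 1 - Λ) := by
      rw [hgdef]; ring
    rw [h1]
    have h2 : -t * α = -(Λ * α / M) := by rw [htdef]; ring
    rw [h2]
  calc (ℙ {ω | ∑ j, τ j ω * (a j * z j ω - b j * (1 - z j ω)) < γ}).toReal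
      ≤ (ℙ {ω | α ≤ Xs ω}).toReal := hmono
    _ ≤ Real.exp (-t * α) * mgf Xs ℙ t := hchern
    _ ≤ Real.exp (-t * α) * (1 + σ2 * g / M ^ 2) ^ Nc := by
        apply mul_le_mul_of_nonneg_left _ (Real.exp_pos _).le
        rw [hfact]
        exact hprod_le
    _ = U Nc α M σ2 Λ := hfinal
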